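/- arXiv:2407.11328 — 2 statements merged into one kernel-verified Lean document; each statement's English description precedes it below -/
import Mathlib

section
/- Let T₁ be the tree on vertex set {1,…,16} with root 1 and edge set {{1,2},{2,3},{3,4},{2,5},{5,6},{1,7},{7,8},{8,9},{9,10},{10,11},{8,12},{12,13},{13,14},{14,15},{14,16}}, and let T₂ be the tree on vertex set {1,…,16} with root 1 and edge set {{1,2},{2,3},{3,4},{3,5},{1,6},{6,7},{7,8},{8,9},{6,10},{10,11},{11,12},{12,13},{13,14},{12,15},{15,16}}. Let S be any finite simple graph with at least two vertices and let r ∈ V(S). For i ∈ {1,2} let Sᵢ = S • Tᵢ be the coalescence obtained by identifying the root of Tᵢ with r, i.e., the graph on V(S) ⊔ (V(Tᵢ)∖{root}) whose edges are those of S, those of Tᵢ not incident to the root, and an edge from r to each neighbor of the root in Tᵢ. Then ψ(S₁,t,μ) = ψ(S₂,t,μ). -/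
open Matrix

open Classical in
noncomputable def adjMat {V : Type*} (G : SimpleGraph V) : Matrix V V ℝ :=
  Matrix.of fun a b => if G.Adj a b then 1 else 0

noncomputable def gdeg {V : Type*} (G : SimpleGraph V) (v : V) : ℕ :=
  Nat.card (G.neighborSet v)

noncomputable def degMat {V : Type*} [DecidableEq V] (G : SimpleGraph V) : Matrix V V ℝ :=
  Matrix.diagonal fun v => (gdeg G v : ℝ)

/-- Two graphs (on possibly different vertex types of the same cardinality) are
degree similar if there is an invertible real matrix conjugating the adjacency
matrix of the first to that of the second, and likewise for the degree matrices. -/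
def DegreeSimilar {V W : Type*} [Fintype V] [Fintype W] [DecidableEq V] [DecidableEq W]
    (G : SimpleGraph V) (H : SimpleGraph W) : Prop :=
  ∃ (e : V ≃ W) (M : Matrix V V ℝ), IsUnit M ∧
    M⁻¹ * adjMat G * M = (adjMat H).submatrix ⇑e ⇑e ∧
    M⁻¹ * degMat G * M = (degMat H).submatrix ⇑e ⇑e

/-- The generalized characteristic polynomial `ψ(X,t,μ) = det(tI - (A - μ D))`,
as the characteristic polynomial (in `t`) of the matrix `A - μ•D` over `ℝ[μ]`. -/
noncomputable def psi {V : Type*} [Fintype V] [DecidableEq V] (G : SimpleGraph V) :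
    Polynomial (Polynomial ℝ) :=
  Matrix.charpoly ((adjMat G).map Polynomial.C - (Polynomial.X : Polynomial ℝ) • (degMat G).map Polynomial.C)

/-- The tree `T₁` (vertices `0,…,15`, root `0`). -/
def T1 : SimpleGraph (Fin 16) :=
  SimpleGraph.fromRel fun a b => ((a : ℕ), (b : ℕ)) ∈
    [(0,1),(1,2),(2,3),(1,4),(4,5),(0,6),(6,7),(7,8),(8,9),(9,10),(7,11),(11,12),
     (12,13),(13,14),(13,15)]

/-- The tree `T₂` (vertices `0,…,15`, root `0`). -/
def T2 : SimpleGraph (Fin 16) :=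
  SimpleGraph.fromRel fun a b => ((a : ℕ), (b : ℕ)) ∈
    [(0,1),(1,2),(2,3),(2,4),(0,5),(5,6),(6,7),(7,8),(5,9),(9,10),(10,11),(11,12),
     (12,13),(11,14),(14,15)]

/-- The coalescence `S • T` of a graph `S` (at the vertex `r`) with a graph `T` on
`Fin 16` rooted at `0`: the root of `T` is identified with `r`. -/
def coalescence {V : Type*} (S : SimpleGraph V) (r : V) (T : SimpleGraph (Fin 16)) :
    SimpleGraph (V ⊕ {x : Fin 16 // x ≠ 0}) :=
  SimpleGraph.fromRel fun a b =>
    match a, b with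
    | Sum.inl a, Sum.inl b => S.Adj a b
    | Sum.inr a, Sum.inr b => T.Adj a.val b.val
    | Sum.inl a, Sum.inr b => a = r ∧ T.Adj 0 b.val
    | Sum.inr _, Sum.inl _ => False

/-!
Relabel the non-root vertices of `Tᵢ` by `Fin 15`. Then the matrix `A - μD` of `S • Tᵢ` is a
block matrix: its `V`-block is the same for both trees (both roots have degree 2), its
off-diagonal blocks are the rank-one matrices `e_r ρᵢ` and `ρᵢᵀ e_rᵀ` for the neighbour vector `ρᵢ`
of the root, and its `Fin 15`-block is the matrix `Wᵢ` of `A - μD` of `Tᵢ` with the root row and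
column deleted (degrees still counted in `Tᵢ`). A polynomial matrix `N = N₀ + μN₁ + μ²N₂` with
`N W₂ = W₁ N`, `ρ₁ N = 2μ ρ₂` and `N ρ₂ = 2μ ρ₁` makes `diag(2μ, N)` intertwine the two block
matrices, and `det N ≠ 0` because `N(1)` is invertible, so the characteristic polynomials agree.
-/
open Matrix Polynomial Finset

section LinearAlgebra

variable {R : Type*} [CommRing R] {m n : Type*} [Fintype m] [Fintype n] [DecidableEq m]
  [DecidableEq n]

theorem Matrix.charpoly_eq_of_mul_eq_mul [IsDomain R] {M₁ M₂ P : Matrix n n R}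
    (h : M₁ * P = P * M₂) (hP : P.det ≠ 0) : M₁.charpoly = M₂.charpoly := by
  have hchar : charmatrix M₁ * C.mapMatrix P = C.mapMatrix P * charmatrix M₂ := by
    simp only [charmatrix, sub_mul, mul_sub, ← map_mul, h,
      (scalar_commute (X : R[X]) (Commute.all X) _).eq]
  have hPC : (C.mapMatrix P).det ≠ 0 := by
    rw [← RingHom.map_det]
    exact (map_ne_zero_iff _ C_injective).mpr hP
  apply mul_right_cancel₀ hPC
  rw [charpoly, charpoly, ← det_mul, hchar, det_mul, mul_comm]

theorem Matrix.charpoly_fromBlocks_vecMulVec_eq [IsDomain R] (B : Matrix m m R) (u v : m → R)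
    {ρ₁ ρ₂ κ₁ κ₂ : n → R} {W₁ W₂ N : Matrix n n R} {x : R} (hx : x ≠ 0) (hN : N.det ≠ 0)
    (hW : N * W₂ = W₁ * N) (hρ : ρ₁ ᵥ* N = x • ρ₂) (hκ : N *ᵥ κ₂ = x • κ₁) :
    (fromBlocks B (vecMulVec u ρ₁) (vecMulVec κ₁ v) W₁).charpoly =
      (fromBlocks B (vecMulVec u ρ₂) (vecMulVec κ₂ v) W₂).charpoly := by
  refine charpoly_eq_of_mul_eq_mul (P := fromBlocks (x • 1) 0 0 N) ?_ ?_
  · simp [fromBlocks_multiply, vecMulVec_mul, mul_vecMulVec, hρ, hκ, hW, vecMulVec_smul,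
      smul_vecMulVec, smul_mulVec]
  · rw [det_fromBlocks_zero₂₁, det_smul, det_one, mul_one]
    exact mul_ne_zero (pow_ne_zero _ hx) hN

theorem Matrix.sum_pow_smul_mul_sub_smul {x : R} {A₁ A₂ D₁ D₂ : Matrix n n R}
    {c : ℕ → Matrix n n R} {d : ℕ} (h₀ : c 0 * A₂ = A₁ * c 0)
    (hsucc : ∀ k < d, c (k + 1) * A₂ - A₁ * c (k + 1) = c k * D₂ - D₁ * c k)
    (hd : c d * D₂ = D₁ * c d) :
    (∑ k ∈ range (d + 1), x ^ k • c k) * (A₂ - x • D₂) =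
      (A₁ - x • D₁) * ∑ k ∈ range (d + 1), x ^ k • c k := by
  suffices defect : ∀ e ≤ d, (∑ k ∈ range (e + 1), x ^ k • c k) * (A₂ - x • D₂) -
      (A₁ - x • D₁) * ∑ k ∈ range (e + 1), x ^ k • c k = x ^ (e + 1) • (D₁ * c e - c e * D₂) by
    rw [← sub_eq_zero, defect d le_rfl, hd, sub_self, smul_zero]
  intro e he
  induction e with
  | zero =>
    simp only [zero_add, range_one, sum_singleton, pow_zero, one_smul, pow_one, mul_sub, sub_mul,
      mul_smul_comm, smul_mul_assoc, h₀]
    module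
  | succ e ih =>
    rw [sum_range_succ, add_mul, mul_add, add_sub_add_comm, ih (by omega)]
    simp only [mul_sub, sub_mul, mul_smul_comm, smul_mul_assoc, smul_sub]
    rw [sub_eq_iff_eq_add.mp (hsucc e (by omega))]
    module

end LinearAlgebra

noncomputable def psiMatrix {V : Type*} [DecidableEq V] (G : SimpleGraph V) : Matrix V V ℝ[X] :=
  (adjMat G).map C - (X : ℝ[X]) • (degMat G).map C

section Graphs

variable {V : Type*} (G : SimpleGraph V)

theorem adjMat_eq_adjMatrix [DecidableRel G.Adj] : adjMat G = G.adjMatrix ℝ := by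
  ext v w
  simp [adjMat, SimpleGraph.adjMatrix_apply]

theorem gdeg_eq_degree (v : V) [Fintype (G.neighborSet v)] : gdeg G v = G.degree v :=
  Nat.card_eq_fintype_card.trans (G.card_neighborSet_eq_degree v)

theorem gdeg_eq_sum_adjMat [Fintype V] (v : V) : (gdeg G v : ℝ) = ∑ u, adjMat G v u := by
  classical
  rw [adjMat_eq_adjMatrix, gdeg_eq_degree]
  simp [SimpleGraph.adjMatrix_apply, SimpleGraph.degree, SimpleGraph.neighborFinset_eq_filter]

@[simp]
theorem adjMat_apply_self (v : V) : adjMat G v v = 0 := by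
  simp [adjMat]

theorem gdeg_apply_eq_sum_submatrix [Fintype V] {W : Type*} [Fintype W] (e : W ≃ V) (i : W) :
    (gdeg G (e i) : ℝ) = ∑ j, (adjMat G).submatrix e e i j := by
  rw [gdeg_eq_sum_adjMat, ← e.sum_comp]
  rfl

theorem psi_eq_charpoly_submatrix [Fintype V] [DecidableEq V] {W : Type*} [Fintype W]
    [DecidableEq W] (e : W ≃ V) : psi G = ((psiMatrix G).submatrix e e).charpoly := by
  rw [← charpoly_reindex e]
  simp [psi, psiMatrix, reindex_apply]

end Graphs

section Coalescence

variable {V : Type*} (S : SimpleGraph V) (r : V) (T : SimpleGraph (Fin 16))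

theorem coalescence_adj_inl_inl {v w : V} :
    (coalescence S r T).Adj (.inl v) (.inl w) ↔ S.Adj v w := by
  simp only [coalescence, SimpleGraph.fromRel_adj, ne_eq, Sum.inl.injEq, S.adj_comm w v, or_self,
    and_iff_right_iff_imp]
  exact SimpleGraph.Adj.ne

theorem coalescence_adj_inl_inr {v : V} {b : {x : Fin 16 // x ≠ 0}} :
    (coalescence S r T).Adj (.inl v) (.inr b) ↔ v = r ∧ T.Adj 0 b := by
  simp [coalescence]

theorem coalescence_adj_inr_inr {a b : {x : Fin 16 // x ≠ 0}} :
    (coalescence S r T).Adj (.inr a) (.inr b) ↔ T.Adj a b := by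
  simp only [coalescence, SimpleGraph.fromRel_adj, ne_eq, Sum.inr.injEq, T.adj_comm b, or_self,
    and_iff_right_iff_imp]
  exact fun h hab => h.ne (congrArg Subtype.val hab)

def coalescenceEquiv : V ⊕ Fin 15 ≃ V ⊕ {x : Fin 16 // x ≠ 0} :=
  Equiv.sumCongr (Equiv.refl V) (finSuccAboveEquiv 0)

variable [DecidableEq V]

theorem adjMat_coalescence_submatrix :
    (adjMat (coalescence S r T)).submatrix coalescenceEquiv coalescenceEquiv =
      fromBlocks (adjMat S) (vecMulVec (Pi.single r 1) fun b => adjMat T 0 b.succ)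
        (vecMulVec (fun b => adjMat T b.succ 0) (Pi.single r 1))
        ((adjMat T).submatrix Fin.succ Fin.succ) := by
  classical
  ext (v | a) (w | b)
  · simp [adjMat, coalescenceEquiv, coalescence_adj_inl_inl]
  · by_cases hv : v = r <;>
      simp [adjMat, coalescenceEquiv, coalescence_adj_inl_inr, finSuccAboveEquiv_apply,
        vecMulVec_apply, hv]
  · by_cases hw : w = r <;>
      simp [adjMat, coalescenceEquiv, (coalescence S r T).adj_comm (.inr _),
        coalescence_adj_inl_inr, finSuccAboveEquiv_apply, T.adj_comm _ 0, vecMulVec_apply, hw]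
  · simp [adjMat, coalescenceEquiv, coalescence_adj_inr_inr, finSuccAboveEquiv_apply]

variable [Fintype V]

theorem gdeg_coalescence_inl (v : V) :
    (gdeg (coalescence S r T) (coalescenceEquiv (.inl v)) : ℝ) =
      gdeg S v + (Pi.single r (gdeg T 0 : ℝ) : V → ℝ) v := by
  rw [gdeg_apply_eq_sum_submatrix, adjMat_coalescence_submatrix, Fintype.sum_sum_type,
    gdeg_eq_sum_adjMat S, gdeg_eq_sum_adjMat T, Fin.sum_univ_succ (adjMat T 0)]
  by_cases hv : v = r <;> simp [vecMulVec_apply, hv]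

theorem gdeg_coalescence_inr (b : Fin 15) :
    (gdeg (coalescence S r T) (coalescenceEquiv (.inr b)) : ℝ) = gdeg T b.succ := by
  rw [gdeg_apply_eq_sum_submatrix, adjMat_coalescence_submatrix, Fintype.sum_sum_type,
    gdeg_eq_sum_adjMat T, Fin.sum_univ_succ (adjMat T b.succ)]
  simp [vecMulVec_apply, Pi.single_apply]

theorem psiMatrix_coalescence_submatrix :
    (psiMatrix (coalescence S r T)).submatrix coalescenceEquiv coalescenceEquiv =
      fromBlocks (psiMatrix S - (X : ℝ[X]) • diagonal (Pi.single r (gdeg T 0 : ℝ[X])))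
        (vecMulVec (Pi.single r 1) fun b => psiMatrix T 0 b.succ)
        (vecMulVec (fun b => psiMatrix T b.succ 0) (Pi.single r 1))
        ((psiMatrix T).submatrix Fin.succ Fin.succ) := by
  ext i j : 1
  have hA := congrFun (congrFun (adjMat_coalescence_submatrix S r T) i) j
  simp only [submatrix_apply] at hA
  simp only [psiMatrix, submatrix_apply, Matrix.sub_apply, map_apply, Matrix.smul_apply, hA,
    degMat]
  rcases i with v | a <;> rcases j with w | b
  · by_cases hvw : v = w
    · subst hvw
      by_cases hv : v = r <;> simp [diagonal_apply, gdeg_coalescence_inl, hv]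
      ring
    · simp [diagonal_apply, hvw]
  · simp [vecMulVec_apply, coalescenceEquiv, Pi.single_apply, apply_ite C,
      (Fin.succ_ne_zero _).symm]
  · simp [diagonal_apply, vecMulVec_apply, coalescenceEquiv, Pi.single_apply, apply_ite C]
  · by_cases hab : a = b
    · subst hab
      simp [diagonal_apply, gdeg_coalescence_inr]
    · simp [diagonal_apply, coalescenceEquiv, hab]

end Coalescence

section RootDeletion

variable {n : ℕ} (T : SimpleGraph (Fin (n + 1))) [DecidableRel T.Adj]

def rootDeletedAdj : Matrix (Fin n) (Fin n) ℤ :=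
  (T.adjMatrix ℤ).submatrix Fin.succ Fin.succ

def rootDeletedDeg : Matrix (Fin n) (Fin n) ℤ :=
  diagonal fun b => (T.degree b.succ : ℤ)

def rootAdjRow (b : Fin n) : ℤ :=
  T.adjMatrix ℤ 0 b.succ

theorem psiMatrix_submatrix_succ :
    (psiMatrix T).submatrix Fin.succ Fin.succ =
      (rootDeletedAdj T).map (Int.castRingHom ℝ[X]) -
        (X : ℝ[X]) • (rootDeletedDeg T).map (Int.castRingHom ℝ[X]) := by
  ext a b : 1
  simp [psiMatrix, rootDeletedAdj, rootDeletedDeg, adjMat_eq_adjMatrix, degMat, gdeg_eq_degree,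
    diagonal_apply, SimpleGraph.adjMatrix_apply, apply_ite C]

theorem psiMatrix_zero_succ (b : Fin n) : psiMatrix T 0 b.succ = rootAdjRow T b := by
  simp [psiMatrix, rootAdjRow, adjMat_eq_adjMatrix, degMat, (Fin.succ_ne_zero b).symm,
    SimpleGraph.adjMatrix_apply, apply_ite C]

theorem psiMatrix_succ_zero (b : Fin n) : psiMatrix T b.succ 0 = rootAdjRow T b := by
  simp [psiMatrix, rootAdjRow, adjMat_eq_adjMatrix, degMat, SimpleGraph.adjMatrix_apply,
    apply_ite C, T.adj_comm]

end RootDeletion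

instance : DecidableRel T1.Adj := fun a b => decidable_of_iff _ (SimpleGraph.fromRel_adj _ a b).symm

instance : DecidableRel T2.Adj := fun a b => decidable_of_iff _ (SimpleGraph.fromRel_adj _ a b).symm

/- `certificate k` is the coefficient of `μ^k` in `N`, an integer solution of the linear
conditions checked below; `certificateInv` is `80 • N(1)⁻¹`. -/
def certificate : ℕ → Matrix (Fin 15) (Fin 15) ℤ
  | 0 =>
    !![ 0,  2,  0,  0,  0, -2,  0,  0,  0,  0,  0,  0,  1,  0,  1;
        1,  0,  1,  1, -1,  0, -1,  0,  0,  0,  0,  0,  0,  1,  0;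
        0,  1,  0,  0,  0,  0,  0, -1, -1,  0,  1,  0, -1,  0,  0;
        1,  0,  1,  1, -1,  0, -1,  0,  0,  0,  0,  1,  0,  0,  0;
        0,  1,  0,  0,  0,  0,  0, -1, -1,  0,  1,  0,  0,  0, -1;
        0, -2,  0,  0,  0,  2,  0,  0,  0,  0,  0,  0, -1,  0, -1;
       -2,  0, -2, -2,  2,  0,  2,  0,  0,  0,  0, -1,  0, -1,  0;
        0, -4,  0,  0,  0,  2,  0,  2,  2,  0, -2,  0,  0,  0,  0;
       -2,  0, -2, -2,  2,  0,  2,  0,  0,  0,  0, -1,  0, -1,  0;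
        0, -2,  0,  0,  0,  2,  0,  0,  0,  0,  0,  0, -1,  0, -1;
        0,  0,  0,  0,  0,  0,  0,  0,  0,  0,  0,  0,  0,  0,  0;
        2,  0,  2,  2, -2,  0, -2,  0,  0,  0,  0,  1,  0,  1,  0;
        0,  6,  0,  0,  0, -4,  0, -2, -2,  0,  2,  0,  1,  0,  1;
        2,  0,  0,  4, -2,  0, -2,  0,  0,  0,  0,  1,  0,  1,  0;
        2,  0,  4,  0, -2,  0, -2,  0,  0,  0,  0,  1,  0,  1,  0]
  | 1 =>
    !![ 0,  0,  0,  0,  2,  0,  0,  0,  0,  0,  0, -1,  0, -1,  0;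
        0,  0,  0,  0,  0,  0,  0,  0,  1,  0, -1,  0,  0,  0,  1;
        0,  0,  1,  1,  0,  0,  0,  0,  0,  0,  0,  0,  0,  1,  0;
        0,  0,  0,  0,  0,  0,  0,  0,  1,  0, -1,  0,  1,  0,  0;
        0,  0,  1,  1,  0,  0,  0,  0,  0,  0,  0,  1,  0,  0,  0;
        2,  0,  0,  0,  0,  0,  0,  0,  0,  0,  0,  1,  0,  1,  0;
        0,  4,  0,  0,  0,  0,  0,  0,  0,  0,  2,  0,  0,  0,  0;
        0,  0,  0,  0,  0,  0,  2,  0,  0,  0,  0,  0,  0,  0,  0;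
        0,  0,  0,  0,  0,  2,  0,  4,  0,  0,  0,  0,  0,  0,  0;
        0,  0, -2, -2,  0,  0,  4,  0,  0,  0,  0,  0,  0,  0,  0;
        0,  0,  0,  0,  0,  0,  0,  0,  0,  2,  0,  0,  0,  0,  0;
        0, -4,  0,  0,  0,  0,  0,  0,  2,  0,  0,  0,  0,  0,  0;
       -4,  0, -2, -2,  4,  0,  0,  0,  0,  0,  0,  0,  0,  0,  0;
        0, -2,  0,  0,  0,  0,  0, -2,  0,  0,  0,  0,  1,  0,  1;
        0, -2,  0,  0,  0,  0,  0, -2,  0,  0,  0,  0,  1,  0,  1]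
  | 2 =>
    !![ 0,  0,  0,  0,  0,  0,  0,  0,  0,  0,  0,  0,  0,  0,  0;
        0,  0,  0,  0,  0,  0,  0,  0,  0,  0,  0,  0,  0, -1,  0;
        0,  0,  0,  0,  0,  0,  0,  0,  0,  0,  0,  0,  0,  0,  0;
        0,  0,  0,  0,  0,  0,  0,  0,  0,  0,  0, -1,  0,  0,  0;
        0,  0,  0,  0,  0,  0,  0,  0,  0,  0,  0,  0,  0,  0,  0;
        0,  0,  0,  0,  0,  0,  0,  0,  0,  0,  0,  0,  0,  0,  0;
        0,  0,  0,  0,  0,  0,  0,  0,  0,  0,  0,  0,  0,  0,  0;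
        0,  0,  0,  0,  0,  0,  0,  0,  0,  0,  0,  0,  0,  0,  0;
        0,  0,  0,  0,  0,  0,  0,  0,  0,  0,  0,  0,  0,  0,  0;
        0,  0,  0,  0,  0,  0,  0,  4,  0,  0,  0,  0,  0,  0,  0;
        0,  0,  0,  0,  0,  0,  0,  0,  0,  0,  0,  0,  0,  0,  0;
        0,  0,  0,  0,  0,  0,  0,  0,  0,  0,  0,  0,  0,  0,  0;
        0,  4,  0,  0,  0,  0,  0,  0,  0,  0,  0,  0,  0,  0,  0;
        0,  0,  0,  0,  0,  0,  0,  0,  0,  0,  0,  0,  0,  0,  0;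
        0,  0,  0,  0,  0,  0,  0,  0,  0,  0,  0,  0,  0,  0,  0]
  | _ => 0

def certificateInv : Matrix (Fin 15) (Fin 15) ℤ :=
  !![ 20,   8,  -4,   8,  -4,  20,   4, -12,  -8,  12,   0,  -4,  -4,   2,   2;
      -4,  16,   4,  16,   4,   4,   4,  -4,   0,   4,   0,  -4,   4,  -2,  -2;
       6,   4,  14,   4,  14,  -6,  -2,   6,   4,  -2,   0,   2,  -2, -11,   9;
       6,   4,  14,   4,  14,  -6,  -2,   6,   4,  -2,   0,   2,  -2,   9, -11;
      20,  -8,   4,  -8,   4,  20,  -4,  12,   8, -12,   0,   4,   4,  -2,  -2;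
     -12,   8,   4,   8,   4,  12,  12,   4,  16, -12,   0, -12,  -4,   6,   6;
       8,   0,   8,   0,   8,  -8,   8,  16, -16,  16,   0,  -8,   0,   4,   4;
       4,   8,   4,   8,   4,  -4, -12, -12,  16,  12,   0,  12,   4,  -2,  -2;
      -4,   8,  -4,   8,  -4,   4,  20,  12,  -8,  -4,   0,  20,   4,  -6,  -6;
       0,   0,   0,   0,   0,   0,   0,   0,   0,   0,  40,   0,   0,   0,   0;
       4,  -8,   4,  -8,   4,  -4,  20, -12,   8,   4,   0,  20,  -4,   6,   6;
      -8,  40, -40, -40,  40,   8,  -8,   8,   0,   8,   0,   8,  16,   4,   4;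
       4, -40,  -4,  40,  -4,  -4,   4,   4,   8,   4,   0,  -4,   4,  14,  14;
      -8, -40,  40,  40, -40,   8,  -8,   8,   0,   8,   0,   8,  16,   4,   4;
       4,  40,  -4, -40,  -4,  -4,   4,   4,   8,   4,   0,  -4,   4,  14,  14]

theorem certificate_zero_mul :
    certificate 0 * rootDeletedAdj T2 = rootDeletedAdj T1 * certificate 0 := by
  decide +kernel

theorem certificate_succ_mul_sub :
    ∀ k < 2, certificate (k + 1) * rootDeletedAdj T2 - rootDeletedAdj T1 * certificate (k + 1) =
      certificate k * rootDeletedDeg T2 - rootDeletedDeg T1 * certificate k := by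
  decide +kernel

theorem certificate_two_mul :
    certificate 2 * rootDeletedDeg T2 = rootDeletedDeg T1 * certificate 2 := by
  decide +kernel

theorem rootAdjRow_vecMul_certificate :
    ∀ k < 3, rootAdjRow T1 ᵥ* certificate k = if k = 1 then 2 • rootAdjRow T2 else 0 := by
  decide +kernel

theorem certificate_mulVec_rootAdjRow :
    ∀ k < 3, certificate k *ᵥ rootAdjRow T2 = if k = 1 then 2 • rootAdjRow T1 else 0 := by
  decide +kernel

theorem sum_certificate_mul_certificateInv :
    (∑ k ∈ range 3, certificate k) * certificateInv = 80 := by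
  decide +kernel

theorem gdeg_T1_zero_eq_gdeg_T2_zero : gdeg T1 0 = gdeg T2 0 := by
  rw [gdeg_eq_degree, gdeg_eq_degree]
  decide +kernel

noncomputable def intertwiner : Matrix (Fin 15) (Fin 15) ℝ[X] :=
  ∑ k ∈ range 3, (X : ℝ[X]) ^ k • (certificate k).map (Int.castRingHom ℝ[X])

theorem intertwiner_mul_psiMatrix :
    intertwiner * (psiMatrix T2).submatrix Fin.succ Fin.succ =
      (psiMatrix T1).submatrix Fin.succ Fin.succ * intertwiner := by
  rw [psiMatrix_submatrix_succ, psiMatrix_submatrix_succ]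
  refine sum_pow_smul_mul_sub_smul (d := 2) ?_ (fun k hk => ?_) ?_
  · simpa only [Matrix.map_mul] using
      congrArg (·.map (Int.castRingHom ℝ[X])) certificate_zero_mul
  · simpa only [Matrix.map_mul, Matrix.map_sub _ (map_sub _)] using
      congrArg (·.map (Int.castRingHom ℝ[X])) (certificate_succ_mul_sub k hk)
  · simpa only [Matrix.map_mul] using
      congrArg (·.map (Int.castRingHom ℝ[X])) certificate_two_mul

theorem vecMul_intertwiner :
    (fun b => psiMatrix T1 0 b.succ) ᵥ* intertwiner =
      (2 * X : ℝ[X]) • fun b => psiMatrix T2 0 b.succ := by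
  have coeff (k : ℕ) :
      (fun b => (rootAdjRow T1 b : ℝ[X])) ᵥ* (certificate k).map (Int.castRingHom ℝ[X]) =
        fun b => ((rootAdjRow T1 ᵥ* certificate k) b : ℝ[X]) :=
    funext fun b => ((Int.castRingHom ℝ[X]).map_vecMul _ _ b).symm
  simp_rw [psiMatrix_zero_succ]
  rw [intertwiner, vecMul_sum]
  simp only [vecMul_smul, coeff, sum_range_succ, range_zero, sum_empty,
    rootAdjRow_vecMul_certificate 0 (by norm_num), rootAdjRow_vecMul_certificate 1 (by norm_num),
    rootAdjRow_vecMul_certificate 2 (by norm_num)]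
  ext b : 1
  simp
  ring

theorem intertwiner_mulVec :
    intertwiner *ᵥ (fun b => psiMatrix T2 b.succ 0) =
      (2 * X : ℝ[X]) • fun b => psiMatrix T1 b.succ 0 := by
  have coeff (k : ℕ) :
      (certificate k).map (Int.castRingHom ℝ[X]) *ᵥ (fun b => (rootAdjRow T2 b : ℝ[X])) =
        fun b => ((certificate k *ᵥ rootAdjRow T2) b : ℝ[X]) :=
    funext fun b => ((Int.castRingHom ℝ[X]).map_mulVec _ _ b).symm
  simp_rw [psiMatrix_succ_zero]
  rw [intertwiner, sum_mulVec]
  simp only [smul_mulVec, coeff, sum_range_succ, range_zero, sum_empty,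
    certificate_mulVec_rootAdjRow 0 (by norm_num), certificate_mulVec_rootAdjRow 1 (by norm_num),
    certificate_mulVec_rootAdjRow 2 (by norm_num)]
  ext b : 1
  simp
  ring

theorem det_sum_certificate_ne_zero : (∑ k ∈ range 3, certificate k).det ≠ 0 := by
  intro h
  have h80 := congrArg det sum_certificate_mul_certificateInv
  rw [det_mul, h, zero_mul, ← diagonal_ofNat, det_diagonal] at h80
  simp at h80

theorem det_intertwiner_ne_zero : intertwiner.det ≠ 0 := by
  have heval : (evalRingHom (1 : ℝ)).mapMatrix intertwiner =
      (Int.castRingHom ℝ).mapMatrix (∑ k ∈ range 3, certificate k) := by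
    ext a b
    simp [intertwiner, Matrix.sum_apply]
  intro h
  apply det_sum_certificate_ne_zero
  have h1 := congrArg (evalRingHom (1 : ℝ)) h
  rw [RingHom.map_det, heval, ← RingHom.map_det, map_zero] at h1
  exact (map_eq_zero_iff _ Int.cast_injective).mp h1

theorem psi_coalescence_eq_general {V : Type*} [Fintype V] [DecidableEq V]
    (S : SimpleGraph V) (r : V) :
    psi (coalescence S r T1) = psi (coalescence S r T2) := by
  rw [psi_eq_charpoly_submatrix _ coalescenceEquiv, psi_eq_charpoly_submatrix _ coalescenceEquiv,
    psiMatrix_coalescence_submatrix, psiMatrix_coalescence_submatrix, gdeg_T1_zero_eq_gdeg_T2_zero]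
  exact charpoly_fromBlocks_vecMulVec_eq _ _ _ (by simp [X_ne_zero]) det_intertwiner_ne_zero
    intertwiner_mul_psiMatrix vecMul_intertwiner intertwiner_mulVec

/-- For any graph `S` with at least two vertices and any vertex `r` of `S`, the
coalescences `S • T₁` and `S • T₂` have the same generalized characteristic
polynomial `ψ`. -/
theorem psi_coalescence_eq {V : Type*} [Fintype V] [DecidableEq V]
    (S : SimpleGraph V) (hS : 2 ≤ Fintype.card V) (r : V) :
    psi (coalescence S r T1) = psi (coalescence S r T2) :=
  psi_coalescence_eq_general S r
end

section
/- Let X₁ and X₂ be degree-similar finite simple graphs, and let Y be a finite simple graph with distinct vertices w₁,…,w_k. Choose distinct vertices u₁,…,u_k ∈ V(X₁) and distinct vertices v₁,…,v_k ∈ V(X₂) such that for each i ∈ {1,…,k}: (i) no other vertex of X₁ has the same degree as uᵢ, and no other vertex of X₂ has the same degree as vᵢ; (ii) deg_{X₁}(uᵢ) = deg_{X₂}(vᵢ); and (iii) the induced subgraph X₁[{u₁,…,u_k}] is connected. Let Γ₁ be the k-sum of X₁ and Y obtained from the disjoint union of X₁ and Y by identifying uᵢ with wᵢ for each i (two identified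 vertices are adjacent in Γ₁ iff the corresponding vertices are adjacent in X₁ or in Y), and let Γ₂ be the k-sum of X₂ and Y obtained by identifying vᵢ with wᵢ. Then Γ₁ and Γ₂ are degree similar. -/
/-!
Write `M⁻¹ A(X₁) M = A(X₂)`, `M⁻¹ D(X₁) M = D(X₂)` as `A(X₁) M = M A(X₂)`, `D(X₁) M = M D(X₂)`.
The second equation says that `M` only links vertices of equal degree. After relabelling `X₂`
so that `vᵢ` becomes `uᵢ`, uniqueness of the degrees forces row and column `uᵢ` of `M` to vanish
off the diagonal. The first equation at `(uᵢ, uⱼ)` then reads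
`A(X₁)(uᵢ,uⱼ) M(uⱼ,uⱼ) = M(uᵢ,uᵢ) A(X₂)(uᵢ,uⱼ)`: `X₁` and `X₂` agree on `{u₁,…,u_k}`, and
`M(uᵢ,uᵢ) = M(uⱼ,uⱼ)` along edges, so by connectivity `M` is a scalar `C` on those rows and
columns. In a `k`-sum, `A(Γ)` and `D(Γ)` are those of `X` extended by zero plus a correction
supported on the glued vertices and the vertices of `Y`, which is the same for `X₁` and `X₂`
and commutes with `M ⊕ C • 1`; so `M ⊕ C • 1` intertwines `Γ₁` and `Γ₂`.
-/

open Matrix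

/-- The `k`-sum of `X` and `Y`, obtained by identifying the vertices `u 0, …, u (k-1)`
of `X` with the vertices `w 0, …, w (k-1)` of `Y` (two identified vertices are
adjacent iff the corresponding vertices are adjacent in `X` or in `Y`). -/
def kSum {V W : Type*} [DecidableEq W] {k : ℕ} (X : SimpleGraph V) (u : Fin k → V)
    (Y : SimpleGraph W) (w : Fin k → W) :
    SimpleGraph (V ⊕ {x : W // ∀ i, x ≠ w i}) :=
  SimpleGraph.fromRel fun a b =>
    match a, b with
    | Sum.inl a, Sum.inl b =>
        X.Adj a b ∨ ∃ i j, a = u i ∧ b = u j ∧ Y.Adj (w i) (w j)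
    | Sum.inr a, Sum.inr b => Y.Adj a.val b.val
    | Sum.inl a, Sum.inr b => ∃ i, a = u i ∧ Y.Adj (w i) b.val
    | Sum.inr _, Sum.inl _ => False


theorem Function.Injective.exists_perm_comp_eq {ι α : Type*} [Finite α] {u v : ι → α}
    (hu : Function.Injective u) (hv : Function.Injective v) :
    ∃ σ : Equiv.Perm α, σ ∘ u = v := by
  classical
  have := Fintype.ofFinite α
  let e : Set.range u ≃ Set.range v :=
    (Equiv.ofInjective u hu).symm.trans (Equiv.ofInjective v hv)
  refine ⟨e.extendSubtype, funext fun i => ?_⟩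
  rw [Function.comp_apply, e.extendSubtype_apply_of_mem _ ⟨i, rfl⟩]
  simp [e, Equiv.ofInjective_symm_apply]

theorem SimpleGraph.Reachable.apply_eq_of_forall_adj {V β : Type*} {G : SimpleGraph V}
    {f : V → β} (hf : ∀ x y, G.Adj x y → f x = f y) {x y : V} (h : G.Reachable x y) :
    f x = f y := by
  rw [SimpleGraph.reachable_iff_reflTransGen] at h
  induction h with
  | refl => rfl
  | tail _ hadj ih => exact ih.trans (hf _ _ hadj)

namespace Matrix

variable {ι R : Type*} [Fintype ι]

theorem inv_mul_mul_eq_iff_mul_eq_mul [DecidableEq ι] [CommRing R] {M A B : Matrix ι ι R}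
    (hM : IsUnit M) : M⁻¹ * A * M = B ↔ A * M = M * B := by
  have := hM.invertible
  rw [Matrix.mul_assoc, inv_mul_eq_iff_eq_mul_of_invertible]

theorem eq_of_diagonal_mul_eq_mul_diagonal [DecidableEq ι] [CommRing R] [IsDomain R]
    {d₁ d₂ : ι → R} {N : Matrix ι ι R} (h : diagonal d₁ * N = N * diagonal d₂) {s t : ι}
    (hst : N s t ≠ 0) : d₁ s = d₂ t := by
  have hst' := congrFun (congrFun h s) t
  rw [diagonal_mul, mul_diagonal, mul_comm] at hst'
  exact mul_left_cancel₀ hst hst'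

theorem mul_apply_of_col_support [NonUnitalNonAssocSemiring R] {A N : Matrix ι ι R} {b : ι}
    (hcol : ∀ x, N x b ≠ 0 → x = b) (a : ι) : (A * N) a b = A a b * N b b := by
  rw [mul_apply, Finset.sum_eq_single b (fun x _ hx => ?_) (by simp)]
  rw [not_imp_comm.mp (hcol x) hx, mul_zero]

theorem mul_apply_of_row_support [NonUnitalNonAssocSemiring R] {A N : Matrix ι ι R} {a : ι}
    (hrow : ∀ y, N a y ≠ 0 → y = a) (b : ι) : (N * A) a b = N a a * A a b := by
  rw [mul_apply, Finset.sum_eq_single a (fun y _ hy => ?_) (by simp)]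
  rw [not_imp_comm.mp (hrow y) hy, zero_mul]

theorem apply_self_ne_zero_of_col_support [DecidableEq ι] [CommRing R] [Nontrivial R]
    {N : Matrix ι ι R} (hN : IsUnit N) {b : ι} (hcol : ∀ x, N x b ≠ 0 → x = b) : N b b ≠ 0 := by
  intro h0
  have h := congrFun (congrFun (nonsing_inv_mul N ((isUnit_iff_isUnit_det N).mp hN)) b) b
  rw [mul_apply_of_col_support hcol, h0, mul_zero, one_apply_eq] at h
  exact zero_ne_one h

theorem commute_of_scalar_on_support [DecidableEq ι] [CommSemiring R] (p : ι → Prop)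
    {N Q : Matrix ι ι R} {C : R}
    (hN : ∀ s, p s → ∀ t, N s t = (C • 1 : Matrix ι ι R) s t ∧ N t s = (C • 1 : Matrix ι ι R) t s)
    (hQ : ∀ s t, Q s t ≠ 0 → p s ∧ p t) : Commute Q N := by
  have hQN : Q * N = C • Q := by
    ext s t
    rw [mul_apply, Finset.sum_eq_single t (fun x _ hx => ?_) (by simp)]
    · by_cases h : Q s t = 0
      · simp [h]
      · simp [(hN t (hQ s t h).2 t).1, mul_comm]
    · by_cases h : Q s x = 0
      · simp [h]
      · simp [(hN x (hQ s x h).2 t).1, hx]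
  have hNQ : N * Q = C • Q := by
    ext s t
    rw [mul_apply, Finset.sum_eq_single s (fun x _ hx => ?_) (by simp)]
    · by_cases h : Q s t = 0
      · simp [h]
      · simp [(hN s (hQ s t h).1 s).1]
    · by_cases h : Q x t = 0
      · simp [h]
      · simp [(hN x (hQ x t h).1 s).2, Ne.symm hx]
  exact hQN.trans hNQ.symm

variable {m n : Type*} [Fintype m] [Fintype n] [DecidableEq m] [DecidableEq n]

theorem fromBlocks_add_mul_eq_mul_fromBlocks_add [CommSemiring R] {U : Set m}
    {M B₁ B₂ : Matrix m m R} {Q : Matrix (m ⊕ n) (m ⊕ n) R} {C : R} (hB : B₁ * M = M * B₂)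
    (hM : ∀ a ∈ U, ∀ b, M a b = (C • 1 : Matrix m m R) a b ∧ M b a = (C • 1 : Matrix m m R) b a)
    (hQ : ∀ s t, Q s t ≠ 0 →
      Sum.elim (· ∈ U) (fun _ => True) s ∧ Sum.elim (· ∈ U) (fun _ => True) t) :
    (fromBlocks B₁ 0 0 0 + Q) * fromBlocks M 0 0 (C • 1) =
      fromBlocks M 0 0 (C • 1) * (fromBlocks B₂ 0 0 0 + Q) := by
  have hN : ∀ s, Sum.elim (· ∈ U) (fun _ => True) s → ∀ t,
      fromBlocks M 0 0 (C • 1) s t = (C • 1 : Matrix (m ⊕ n) (m ⊕ n) R) s t ∧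
      fromBlocks M 0 0 (C • 1) t s = (C • 1 : Matrix (m ⊕ n) (m ⊕ n) R) t s := by
    rintro (a | a) hs (b | b) <;> simp_all [one_apply]
  rw [add_mul, mul_add, (commute_of_scalar_on_support _ hN hQ).eq, fromBlocks_multiply,
    fromBlocks_multiply, hB]
  simp

theorem isUnit_fromBlocks_smul_one [CommRing R] {M : Matrix m m R} (hM : IsUnit M) {C : R}
    (hC : IsUnit C) : IsUnit (fromBlocks M 0 0 (C • 1 : Matrix n n R)) := by
  rw [isUnit_iff_isUnit_det, det_fromBlocks_zero₂₁, det_smul, det_one, mul_one]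
  exact ((isUnit_iff_isUnit_det M).mp hM).mul (hC.pow _)

end Matrix

section GraphMatrices

variable {V W : Type*}

theorem adjMat_apply_congr {G : SimpleGraph V} {H : SimpleGraph W} {a b : V} {c d : W}
    (h : G.Adj a b ↔ H.Adj c d) : adjMat G a b = adjMat H c d := by
  classical
  exact if_congr h rfl rfl

theorem adjMat_apply_eq_zero {G : SimpleGraph V} {a b : V} (h : ¬G.Adj a b) :
    adjMat G a b = 0 := by
  classical
  exact if_neg h

theorem adjMat_comap (G : SimpleGraph W) (f : V → W) :
    adjMat (G.comap f) = (adjMat G).submatrix f f := rfl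

theorem gdeg_comap (G : SimpleGraph W) (e : V ≃ W) (a : V) :
    gdeg (G.comap e) a = gdeg G (e a) :=
  Nat.card_congr (e.subtypeEquiv fun _ => Iff.rfl)

theorem degMat_comap [DecidableEq V] [DecidableEq W] (G : SimpleGraph W) (e : V ≃ W) :
    degMat (G.comap e) = (degMat G).submatrix e e := by
  rw [degMat, degMat, submatrix_diagonal_equiv]
  simp only [gdeg_comap, Function.comp_def]

theorem degMat_eq_diagonal_adjMat_mulVec [Fintype V] [DecidableEq V] (G : SimpleGraph V) :
    degMat G = diagonal (adjMat G *ᵥ 1) := by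
  classical
  have hA : adjMat G = G.adjMatrix ℝ := rfl
  rw [degMat, hA]
  congr 1
  ext v
  rw [show (1 : V → ℝ) = Function.const V 1 from rfl, SimpleGraph.adjMatrix_mulVec_const_apply,
    mul_one, gdeg, Nat.card_eq_fintype_card, SimpleGraph.card_neighborSet_eq_degree]

end GraphMatrices

section Intertwines

variable {V : Type*} [Fintype V] [DecidableEq V]

def Intertwines (M : Matrix V V ℝ) (G H : SimpleGraph V) : Prop :=
  adjMat G * M = M * adjMat H ∧ degMat G * M = M * degMat H

theorem degreeSimilar_iff {W : Type*} [Fintype W] [DecidableEq W] {G : SimpleGraph V}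
    {H : SimpleGraph W} :
    DegreeSimilar G H ↔
      ∃ (e : V ≃ W) (M : Matrix V V ℝ), IsUnit M ∧ Intertwines M G (H.comap e) := by
  refine exists_congr fun e => exists_congr fun M => ?_
  rw [Intertwines, adjMat_comap, degMat_comap]
  exact ⟨fun ⟨hM, hA, hD⟩ => ⟨hM, (inv_mul_mul_eq_iff_mul_eq_mul hM).mp hA,
      (inv_mul_mul_eq_iff_mul_eq_mul hM).mp hD⟩,
    fun ⟨hM, hA, hD⟩ => ⟨hM, (inv_mul_mul_eq_iff_mul_eq_mul hM).mpr hA,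
      (inv_mul_mul_eq_iff_mul_eq_mul hM).mpr hD⟩⟩

variable {M : Matrix V V ℝ} {G H : SimpleGraph V}

theorem Intertwines.comap_perm (h : Intertwines M G H) (σ : Equiv.Perm V) :
    Intertwines (M.submatrix id σ) G (H.comap σ) := by
  have reindex (A B : Matrix V V ℝ) (hAB : A * M = M * B) :
      A * M.submatrix id σ = M.submatrix id σ * B.submatrix σ σ := by
    rw [submatrix_mul_equiv, ← hAB]
    ext a b
    simp [mul_apply]
  exact ⟨reindex _ _ h.1, by rw [degMat_comap]; exact reindex _ _ h.2⟩

theorem Intertwines.gdeg_eq (h : Intertwines M G H) {a b : V} (hab : M a b ≠ 0) :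
    gdeg G a = gdeg H b := by
  exact_mod_cast eq_of_diagonal_mul_eq_mul_diagonal h.2 hab

theorem DegreeSimilar.exists_intertwines_comp_eq {W ι : Type*} [Fintype W] [DecidableEq W]
    {H : SimpleGraph W} (h : DegreeSimilar G H) {u : ι → V} {v : ι → W}
    (hu : Function.Injective u) (hv : Function.Injective v) :
    ∃ (f : V ≃ W) (N : Matrix V V ℝ), IsUnit N ∧ Intertwines N G (H.comap f) ∧ f ∘ u = v := by
  obtain ⟨e, M, hM, hMGH⟩ := degreeSimilar_iff.mp h
  obtain ⟨σ, hσ⟩ := hu.exists_perm_comp_eq (e.symm.injective.comp hv)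
  refine ⟨σ.trans e, M.submatrix id σ, (isUnit_submatrix_equiv (Equiv.refl V) σ).mpr hM,
    hMGH.comap_perm σ, ?_⟩
  rw [Equiv.coe_trans, Function.comp_assoc, hσ, ← Function.comp_assoc, e.self_comp_symm,
    Function.id_comp]

end Intertwines

section ScalarOnSupport

variable {V : Type*} [Fintype V] {M : Matrix V V ℝ} {G H : SimpleGraph V}

theorem adj_iff_and_apply_self_eq_of_support (hA : adjMat G * M = M * adjMat H) {a b : V}
    (hrow : ∀ y, M a y ≠ 0 → y = a) (hcol : ∀ x, M x b ≠ 0 → x = b) (ha : M a a ≠ 0)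
    (hb : M b b ≠ 0) : (G.Adj a b ↔ H.Adj a b) ∧ (G.Adj a b → M a a = M b b) := by
  have hab := congrFun (congrFun hA a) b
  rw [mul_apply_of_col_support hcol, mul_apply_of_row_support hrow] at hab
  by_cases hG : G.Adj a b <;> by_cases hH : H.Adj a b <;> simp_all [adjMat]

theorem adj_iff_of_support [DecidableEq V] (hA : adjMat G * M = M * adjMat H) (hM : IsUnit M)
    {U : Set V} (hrow : ∀ a ∈ U, ∀ y, M a y ≠ 0 → y = a) (hcol : ∀ b ∈ U, ∀ x, M x b ≠ 0 → x = b)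
    {a b : V} (ha : a ∈ U) (hb : b ∈ U) : G.Adj a b ↔ H.Adj a b :=
  (adj_iff_and_apply_self_eq_of_support hA (hrow a ha) (hcol b hb)
    (apply_self_ne_zero_of_col_support hM (hcol a ha))
    (apply_self_ne_zero_of_col_support hM (hcol b hb))).1

theorem exists_scalar_of_support [DecidableEq V] (hA : adjMat G * M = M * adjMat H)
    (hM : IsUnit M) {U : Set V} (hrow : ∀ a ∈ U, ∀ y, M a y ≠ 0 → y = a)
    (hcol : ∀ b ∈ U, ∀ x, M x b ≠ 0 → x = b) (hU : (G.induce U).Preconnected) :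
    ∃ C : ℝ, C ≠ 0 ∧ ∀ a ∈ U, ∀ b,
      M a b = (C • 1 : Matrix V V ℝ) a b ∧ M b a = (C • 1 : Matrix V V ℝ) b a := by
  have hdiag : ∀ a ∈ U, M a a ≠ 0 := fun a ha =>
    apply_self_ne_zero_of_col_support hM (hcol a ha)
  have hconst : ∀ a ∈ U, ∀ b ∈ U, M a a = M b b := fun a ha b hb =>
    (hU ⟨a, ha⟩ ⟨b, hb⟩).apply_eq_of_forall_adj (f := fun x : U => M x x) fun x y hxy =>
      (adj_iff_and_apply_self_eq_of_support hA (hrow x x.2) (hcol y y.2) (hdiag x x.2)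
        (hdiag y y.2)).2 hxy
  rcases U.eq_empty_or_nonempty with rfl | ⟨a₀, ha₀⟩
  · exact ⟨1, one_ne_zero, by simp⟩
  refine ⟨M a₀ a₀, hdiag a₀ ha₀, fun a ha b => ?_⟩
  rcases eq_or_ne a b with rfl | hab
  · simp [hconst a ha a₀ ha₀]
  · simp only [Matrix.smul_apply, one_apply_ne hab, one_apply_ne hab.symm, smul_zero]
    exact ⟨not_imp_comm.mp (hrow a ha b) hab.symm, not_imp_comm.mp (hcol a ha b) hab.symm⟩

end ScalarOnSupport

section KSum

variable {V W : Type*} [DecidableEq W] {k : ℕ}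

theorem kSum_comap {V' : Type*} (X : SimpleGraph V') {f : V → V'} (hf : Function.Injective f)
    (u : Fin k → V) (Y : SimpleGraph W) (w : Fin k → W) :
    kSum (X.comap f) u Y w = (kSum X (f ∘ u) Y w).comap (Sum.map f id) := by
  ext (a | a) (b | b) <;> simp [kSum, hf.eq_iff]

variable (X : SimpleGraph V) (u : Fin k → V) (Y : SimpleGraph W) (w : Fin k → W)

@[simp]
theorem kSum_adj_inl_inl {a b : V} : (kSum X u Y w).Adj (.inl a) (.inl b) ↔
    X.Adj a b ∨ a ≠ b ∧ ∃ i j, a = u i ∧ b = u j ∧ Y.Adj (w i) (w j) := by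
  simp only [kSum, SimpleGraph.fromRel_adj, ne_eq, Sum.inl.injEq]
  constructor
  · rintro ⟨hab, (h | ⟨i, j, rfl, rfl, hY⟩) | (h | ⟨i, j, rfl, rfl, hY⟩)⟩
    exacts [.inl h, .inr ⟨hab, i, j, rfl, rfl, hY⟩, .inl h.symm,
      .inr ⟨hab, j, i, rfl, rfl, hY.symm⟩]
  · rintro (h | ⟨hab, h⟩)
    exacts [⟨h.ne, .inl (.inl h)⟩, ⟨hab, .inl (.inr h)⟩]

@[simp]
theorem kSum_adj_inl_inr {a : V} {b : {x : W // ∀ i, x ≠ w i}} :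
    (kSum X u Y w).Adj (.inl a) (.inr b) ↔ ∃ i, a = u i ∧ Y.Adj (w i) b := by
  simp [kSum]

@[simp]
theorem kSum_adj_inr_inl {a : {x : W // ∀ i, x ≠ w i}} {b : V} :
    (kSum X u Y w).Adj (.inr a) (.inl b) ↔ ∃ i, b = u i ∧ Y.Adj (w i) a := by
  simp [kSum]

noncomputable def kSumGlueMat :
    Matrix (V ⊕ {x : W // ∀ i, x ≠ w i}) (V ⊕ {x : W // ∀ i, x ≠ w i}) ℝ :=
  adjMat (kSum X u Y w) - fromBlocks (adjMat X) 0 0 0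

theorem adjMat_kSum : adjMat (kSum X u Y w) = fromBlocks (adjMat X) 0 0 0 + kSumGlueMat X u Y w :=
  (add_sub_cancel _ _).symm

theorem degMat_kSum [Fintype V] [DecidableEq V] [Fintype W] :
    degMat (kSum X u Y w) =
      fromBlocks (degMat X) 0 0 0 + diagonal (kSumGlueMat X u Y w *ᵥ 1) := by
  rw [degMat_eq_diagonal_adjMat_mulVec, degMat_eq_diagonal_adjMat_mulVec, adjMat_kSum,
    add_mulVec, ← diagonal_zero, fromBlocks_diagonal, diagonal_add]
  congr 1
  ext (a | a) <;> simp [fromBlocks_mulVec]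

theorem kSumGlueMat_apply_ne_zero {s t : V ⊕ {x : W // ∀ i, x ≠ w i}}
    (h : kSumGlueMat X u Y w s t ≠ 0) :
    Sum.elim (· ∈ Set.range u) (fun _ => True) s ∧
      Sum.elim (· ∈ Set.range u) (fun _ => True) t := by
  contrapose! h
  rcases s with a | a <;> rcases t with b | b <;>
    simp only [Sum.elim_inl, Sum.elim_inr, not_true_eq_false, imp_false, forall_const] at h <;>
    simp only [kSumGlueMat, Matrix.sub_apply, fromBlocks_apply₁₁, fromBlocks_apply₁₂,
      fromBlocks_apply₂₁, Matrix.zero_apply, sub_zero]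
  · rw [adjMat_apply_congr (H := X), sub_self]
    simp only [kSum_adj_inl_inl, or_iff_left_iff_imp]
    rintro ⟨-, i, j, rfl, rfl, -⟩
    exact absurd ⟨j, rfl⟩ (h ⟨i, rfl⟩)
  · refine adjMat_apply_eq_zero ?_
    rw [kSum_adj_inl_inr]
    rintro ⟨i, rfl, -⟩
    exact h ⟨i, rfl⟩
  · refine adjMat_apply_eq_zero ?_
    rw [kSum_adj_inr_inl]
    rintro ⟨i, rfl, -⟩
    exact h ⟨i, rfl⟩

theorem kSumGlueMat_congr {X₁ X₂ : SimpleGraph V}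
    (hX : ∀ i j, X₁.Adj (u i) (u j) ↔ X₂.Adj (u i) (u j)) :
    kSumGlueMat X₁ u Y w = kSumGlueMat X₂ u Y w := by
  ext s t
  by_cases hst : Sum.elim (· ∈ Set.range u) (fun _ => True) s ∧
      Sum.elim (· ∈ Set.range u) (fun _ => True) t
  · simp only [kSumGlueMat, Matrix.sub_apply]
    rcases s with a | a <;> rcases t with b | b
    · obtain ⟨⟨i, rfl⟩, ⟨j, rfl⟩⟩ := hst
      rw [fromBlocks_apply₁₁, fromBlocks_apply₁₁, adjMat_apply_congr (hX i j),
        adjMat_apply_congr (H := kSum X₂ u Y w)]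
      simp only [kSum_adj_inl_inl, hX]
    -- the other blocks of `kSum X u Y w` do not involve `X`
    all_goals rfl
  · rw [not_imp_comm.mp (kSumGlueMat_apply_ne_zero X₁ u Y w) hst,
      not_imp_comm.mp (kSumGlueMat_apply_ne_zero X₂ u Y w) hst]

end KSum

theorem Intertwines.kSum {V W : Type*} [Fintype V] [DecidableEq V] [Fintype W] [DecidableEq W]
    {k : ℕ} {M : Matrix V V ℝ} {X₁ X₂ : SimpleGraph V} (h : Intertwines M X₁ X₂)
    {u : Fin k → V} (hX : ∀ i j, X₁.Adj (u i) (u j) ↔ X₂.Adj (u i) (u j)) {C : ℝ}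
    (hM : ∀ a ∈ Set.range u, ∀ b,
      M a b = (C • 1 : Matrix V V ℝ) a b ∧ M b a = (C • 1 : Matrix V V ℝ) b a)
    (Y : SimpleGraph W) (w : Fin k → W) :
    Intertwines (fromBlocks M 0 0 (C • 1)) (kSum X₁ u Y w) (kSum X₂ u Y w) := by
  rw [Intertwines, adjMat_kSum, adjMat_kSum, degMat_kSum, degMat_kSum, kSumGlueMat_congr u Y w hX]
  refine ⟨fromBlocks_add_mul_eq_mul_fromBlocks_add h.1 hM
    fun s t hst => kSumGlueMat_apply_ne_zero X₂ u Y w hst,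
    fromBlocks_add_mul_eq_mul_fromBlocks_add h.2 hM fun s t hst => ?_⟩
  obtain rfl : s = t := by
    by_contra hne
    exact hst (diagonal_apply_ne _ hne)
  rw [diagonal_apply_eq] at hst
  obtain ⟨x, -, hx⟩ := Finset.exists_ne_zero_of_sum_ne_zero hst
  have hs := (kSumGlueMat_apply_ne_zero X₂ u Y w (left_ne_zero_of_mul hx)).1
  exact ⟨hs, hs⟩

theorem degreeSimilar_kSum_general {V W : Type*} [Fintype V] [Fintype W]
    [DecidableEq V] [DecidableEq W] {k : ℕ}
    (X₁ X₂ : SimpleGraph V) (h : DegreeSimilar X₁ X₂)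
    (Y : SimpleGraph W) (w : Fin k → W)
    (u v : Fin k → V) (hu : Function.Injective u) (hv : Function.Injective v)
    (h1u : ∀ i, ∀ x : V, gdeg X₁ x = gdeg X₁ (u i) → x = u i)
    (h1v : ∀ i, ∀ x : V, gdeg X₂ x = gdeg X₂ (v i) → x = v i)
    (h2 : ∀ i, gdeg X₁ (u i) = gdeg X₂ (v i))
    (h3 : (X₁.induce (Set.range u)).Connected) :
    DegreeSimilar (kSum X₁ u Y w) (kSum X₂ v Y w) := by
  obtain ⟨f, M, hM, hMX, hf⟩ := h.exists_intertwines_comp_eq hu hv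
  have hrow : ∀ a ∈ Set.range u, ∀ b, M a b ≠ 0 → b = a := by
    rintro _ ⟨i, rfl⟩ b hb
    refine f.injective ((h1v i (f b) ?_).trans (congrFun hf i).symm)
    rw [← gdeg_comap, ← hMX.gdeg_eq hb, h2]
  have hcol : ∀ b ∈ Set.range u, ∀ a, M a b ≠ 0 → a = b := by
    rintro _ ⟨i, rfl⟩ a ha
    refine h1u i a ?_
    rw [hMX.gdeg_eq ha, gdeg_comap, h2, ← congrFun hf i, Function.comp_apply]
  obtain ⟨C, hC, hMC⟩ := exists_scalar_of_support hMX.1 hM hrow hcol h3.preconnected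
  have hX (i j : Fin k) : X₁.Adj (u i) (u j) ↔ (X₂.comap f).Adj (u i) (u j) :=
    adj_iff_of_support hMX.1 hM hrow hcol (Set.mem_range_self i) (Set.mem_range_self j)
  have hΓ : kSum (X₂.comap f) u Y w =
      (kSum X₂ v Y w).comap (Equiv.sumCongr f (Equiv.refl _)) := by
    rw [← hf]
    exact kSum_comap X₂ f.injective u Y w
  exact degreeSimilar_iff.mpr ⟨Equiv.sumCongr f (Equiv.refl _), _,
    isUnit_fromBlocks_smul_one hM hC.isUnit, hΓ ▸ hMX.kSum hX hMC Y w⟩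

/-- If `X₁` and `X₂` are degree similar, each `uᵢ` (resp. `vᵢ`) is the unique vertex of
its degree in `X₁` (resp. `X₂`), corresponding degrees agree, and `X₁[{u₁,…,u_k}]` is
connected, then the `k`-sums of `X₁` and `X₂` with `Y` along these vertices are
degree similar. -/
theorem degreeSimilar_kSum {V W : Type*} [Fintype V] [Fintype W]
    [DecidableEq V] [DecidableEq W] {k : ℕ}
    (X₁ X₂ : SimpleGraph V) (h : DegreeSimilar X₁ X₂)
    (Y : SimpleGraph W) (w : Fin k → W) (hw : Function.Injective w)
    (u v : Fin k → V) (hu : Function.Injective u) (hv : Function.Injective v)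
    (h1u : ∀ i, ∀ x : V, gdeg X₁ x = gdeg X₁ (u i) → x = u i)
    (h1v : ∀ i, ∀ x : V, gdeg X₂ x = gdeg X₂ (v i) → x = v i)
    (h2 : ∀ i, gdeg X₁ (u i) = gdeg X₂ (v i))
    (h3 : (X₁.induce (Set.range u)).Connected) :
    DegreeSimilar (kSum X₁ u Y w) (kSum X₂ v Y w) :=
  degreeSimilar_kSum_general X₁ X₂ h Y w u v hu hv h1u h1v h2 h3
end
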